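/- arXiv:2506.01821 — 2 statements merged into one kernel-verified Lean document; each statement's English description precedes it below -/
import Mathlib

section
/- For every α with |α| < 1 and every y ∈ ℝ, ∫_ℝ E(η - y)·e^{αη} dη = (artanh(α)/α)·e^{αy}. -/
open MeasureTheory

/-- The normalized exponential integral kernel E(x) = (1/2)·∫_{|x|}^∞ e^{-t}/t dt. -/
noncomputable def Ek (x : ℝ) : ℝ := (1 / 2) * ∫ t in Set.Ioi |x|, Real.exp (-t) / t

/-- The inverse hyperbolic tangent artanh(a) = (1/2)·log((1+a)/(1-a)). -/
noncomputable def artanh (a : ℝ) : ℝ := (1 / 2) * Real.log ((1 + a) / (1 - a))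

/-!
Writing `Ek x` as an integral over `t > |x|` and applying Fubini turns the integral into
`∫_{t>0} (e^{-t}/2t) ∫_{-t}^{t} e^{αx} dx dt`. The substitution `x = ts` makes this
`(1/2) ∫_{t>0} ∫_{-1}^{1} e^{-(1-αs)t} ds dt`, and a second use of Fubini gives
`(1/2) ∫_{-1}^{1} ds / (1 - αs) = artanh α / α`. Translating by `y` contributes the factor `e^{αy}`.
-/

open Real hiding artanh
open Set

theorem integrable_prod_of_nonneg {α β : Type*} [MeasurableSpace α] [MeasurableSpace β]
    {μ : Measure α} {ν : Measure β} [SFinite ν] {f : α × β → ℝ}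
    (hf : AEStronglyMeasurable f (μ.prod ν)) (hf_nonneg : ∀ p, 0 ≤ f p)
    (h_slice : ∀ᵐ a ∂μ, Integrable (fun b => f (a, b)) ν)
    (h_iter : Integrable (fun a => ∫ b, f (a, b) ∂ν) μ) : Integrable f (μ.prod ν) := by
  refine (integrable_prod_iff hf).2 ⟨h_slice, ?_⟩
  simpa only [Real.norm_of_nonneg (hf_nonneg _)] using h_iter

theorem integral_exp_neg_mul_Ioi_zero {c : ℝ} (hc : 0 < c) :
    ∫ t in Ioi (0 : ℝ), exp (-c * t) = c⁻¹ := by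
  rw [integral_exp_mul_Ioi (by linarith) 0]
  simp [neg_div_neg_eq, one_div]

section

variable {α : ℝ}

theorem one_sub_mul_pos (hα : |α| < 1) {s : ℝ} (hs : s ∈ Icc (-1 : ℝ) 1) : 0 < 1 - α * s := by
  have : |α * s| < 1 := by
    rw [abs_mul]
    exact lt_of_le_of_lt (mul_le_of_le_one_right (abs_nonneg α) (abs_le.2 hs)) hα
  linarith [le_abs_self (α * s)]

theorem integrable_exp_neg_one_sub_mul_mul (hα : |α| < 1) :
    Integrable (fun p : ℝ × ℝ => exp (-(1 - α * p.1) * p.2))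
      ((volume.restrict (Ioc (-1) 1)).prod (volume.restrict (Ioi 0))) := by
  refine integrable_prod_of_nonneg (by fun_prop) (fun _ => (exp_pos _).le) ?_ ?_
  · filter_upwards [ae_restrict_mem measurableSet_Ioc] with s hs
    exact exp_neg_integrableOn_Ioi 0 (one_sub_mul_pos hα (Ioc_subset_Icc_self hs))
  · have hcont : ContinuousOn (fun s : ℝ => (1 - α * s)⁻¹) (Icc (-1) 1) :=
      (continuousOn_const.sub (continuousOn_const.mul continuousOn_id)).inv₀
        fun s hs => (one_sub_mul_pos hα hs).ne'
    refine ((hcont.integrableOn_Icc).mono_set Ioc_subset_Icc_self).congr ?_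
    filter_upwards [ae_restrict_mem measurableSet_Ioc] with s hs
    exact (integral_exp_neg_mul_Ioi_zero (one_sub_mul_pos hα (Ioc_subset_Icc_self hs))).symm

theorem integral_Ioi_integral_exp_neg_one_sub_mul_mul (hα : |α| < 1) :
    ∫ t in Ioi (0 : ℝ), ∫ s in (-1 : ℝ)..1, exp (-(1 - α * s) * t) =
      ∫ s in (-1 : ℝ)..1, (1 - α * s)⁻¹ := by
  simp only [intervalIntegral.integral_of_le (by norm_num : (-1 : ℝ) ≤ 1)]
  rw [← integral_integral_swap (integrable_exp_neg_one_sub_mul_mul hα)]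
  exact setIntegral_congr_fun measurableSet_Ioc fun s hs =>
    integral_exp_neg_mul_Ioi_zero (one_sub_mul_pos hα (Ioc_subset_Icc_self hs))

noncomputable def ekExpIntegrand (α : ℝ) : ℝ × ℝ → ℝ :=
  {p | |p.2| < p.1}.indicator fun p => exp (-p.1) / p.1 * exp (α * p.2) / 2

theorem measurable_ekExpIntegrand (α : ℝ) : Measurable (ekExpIntegrand α) :=
  (by fun_prop : Measurable fun p : ℝ × ℝ => exp (-p.1) / p.1 * exp (α * p.2) / 2).indicator
    (measurableSet_lt (by fun_prop) (by fun_prop))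

theorem ekExpIntegrand_nonneg (α : ℝ) (p : ℝ × ℝ) : 0 ≤ ekExpIntegrand α p := by
  refine indicator_nonneg (fun q hq => ?_) p
  have : 0 < q.1 := (abs_nonneg q.2).trans_lt hq
  positivity

theorem integral_ekExpIntegrand_left (α x : ℝ) :
    ∫ t in Ioi 0, ekExpIntegrand α (t, x) = Ek x * exp (α * x) := by
  have hslice : (fun t => ekExpIntegrand α (t, x)) =
      (Ioi |x|).indicator fun t => exp (-t) / t * (exp (α * x) / 2) := by
    ext t
    simp only [ekExpIntegrand, indicator, mem_ofPred_eq, mem_Ioi, mul_div_assoc]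
  rw [hslice, integral_indicator measurableSet_Ioi, Measure.restrict_restrict measurableSet_Ioi,
    inter_eq_left.2 (Ioi_subset_Ioi (abs_nonneg x)), integral_mul_const, Ek]
  ring

theorem ekExpIntegrand_slice (α t : ℝ) : (fun x => ekExpIntegrand α (t, x)) =
    (Ioo (-t) t).indicator fun x => exp (-t) / t / 2 * exp (α * x) := by
  ext x
  simp only [ekExpIntegrand, indicator, mem_ofPred_eq, mem_Ioo, ← abs_lt]
  split_ifs <;> ring

theorem integral_ekExpIntegrand_right {t : ℝ} (ht : 0 < t) :
    ∫ x, ekExpIntegrand α (t, x) = (1 / 2) * ∫ s in (-1 : ℝ)..1, exp (-(1 - α * s) * t) := by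
  have hsub : ∫ s in (-1 : ℝ)..1, exp (α * (t * s)) = t⁻¹ * ∫ x in -t..t, exp (α * x) := by
    simpa using
      intervalIntegral.integral_comp_mul_left (fun x => exp (α * x)) ht.ne' (a := -1) (b := 1)
  have hsplit : ∀ s, exp (-(1 - α * s) * t) = exp (-t) * exp (α * (t * s)) := fun s => by
    rw [← exp_add]; ring_nf
  rw [ekExpIntegrand_slice, integral_indicator measurableSet_Ioo, integral_const_mul,
    ← integral_Ioc_eq_integral_Ioo, ← intervalIntegral.integral_of_le (by linarith)]
  simp only [hsplit, intervalIntegral.integral_const_mul, hsub]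
  ring

theorem integrable_ekExpIntegrand (hα : |α| < 1) :
    Integrable (ekExpIntegrand α) ((volume.restrict (Ioi 0)).prod volume) := by
  refine integrable_prod_of_nonneg (measurable_ekExpIntegrand α).aestronglyMeasurable
    (ekExpIntegrand_nonneg α) ?_ ?_
  · refine ae_of_all _ fun t => ?_
    rw [ekExpIntegrand_slice, integrable_indicator_iff measurableSet_Ioo]
    exact (Continuous.integrableOn_Icc (by fun_prop)).mono_set Ioo_subset_Icc_self
  · have h := ((integrable_exp_neg_one_sub_mul_mul hα).integral_prod_right).const_mul (1 / 2)
    refine h.congr ?_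
    filter_upwards [ae_restrict_mem measurableSet_Ioi] with t ht
    rw [integral_ekExpIntegrand_right ht, intervalIntegral.integral_of_le (by norm_num)]

theorem integral_Ek_mul_exp (hα : |α| < 1) :
    ∫ x, Ek x * exp (α * x) = (1 / 2) * ∫ s in (-1 : ℝ)..1, (1 - α * s)⁻¹ :=
  calc ∫ x, Ek x * exp (α * x) = ∫ x, ∫ t in Ioi 0, ekExpIntegrand α (t, x) := by
        simp only [integral_ekExpIntegrand_left]
    _ = ∫ t in Ioi 0, ∫ x, ekExpIntegrand α (t, x) :=
        (integral_integral_swap (f := fun t x => ekExpIntegrand α (t, x))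
          (integrable_ekExpIntegrand hα)).symm
    _ = ∫ t in Ioi 0, (1 / 2) * ∫ s in (-1 : ℝ)..1, exp (-(1 - α * s) * t) :=
        setIntegral_congr_fun measurableSet_Ioi fun _ ht => integral_ekExpIntegrand_right ht
    _ = (1 / 2) * ∫ s in (-1 : ℝ)..1, (1 - α * s)⁻¹ := by
        rw [integral_const_mul, integral_Ioi_integral_exp_neg_one_sub_mul_mul hα]

theorem integral_inv_one_sub_mul (hα₀ : α ≠ 0) (hα : |α| < 1) :
    ∫ s in (-1 : ℝ)..1, (1 - α * s)⁻¹ = 2 * artanh α / α := by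
  obtain ⟨hα₁, hα₂⟩ := abs_lt.1 hα
  rw [intervalIntegral.integral_comp_sub_mul (fun x => x⁻¹) hα₀,
    integral_inv_of_pos (by linarith) (by linarith), artanh, smul_eq_mul]
  field_simp
  ring_nf

end

/-- for |α| < 1 and y ∈ ℝ, ∫_ℝ E(η-y)e^{αη} dη = (artanh α / α)·e^{αy}. -/
theorem stmt4 : ∀ α : ℝ, |α| < 1 → ∀ y : ℝ,
    (∫ η : ℝ, Ek (η - y) * Real.exp (α * η)) =
      (if α = 0 then 1 else artanh α / α) * Real.exp (α * y) := by
  intro α hα y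
  have htranslate : ∀ x, Ek (x + y - y) * exp (α * (x + y)) = Ek x * exp (α * x) * exp (α * y) :=
    fun x => by rw [add_sub_cancel_right, mul_add, exp_add, mul_assoc]
  rw [← integral_add_right_eq_self _ y]
  simp only [htranslate, integral_mul_const, integral_Ek_mul_exp hα]
  split_ifs with hα₀
  · norm_num [hα₀]
  · rw [integral_inv_one_sub_mul hα₀ hα]
    ring
end

section
/- (Hopf-type lemma) Let c > 0, T_M > 0 and f ∈ C²(ℝ_+) ∩ C_b(ℝ_+) with 0 ≤ f ≤ T_M solve f'' − c f' − f⁴ + ∫_0^∞ E(y−η)f⁴(η)dη = 0 on (0,∞) with f(0) = T_M. Then f(y) < T_M for all y > 0 and ∂_y f(0⁺) < 0. -/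
/-!
Let `L f = f'' - c f'`. Since `E` is positive with total mass one, `∫₀^∞ E (y - η) dη < 1`, so
the equation gives `L f (y) = f(y)⁴ - ∫₀^∞ E (y - η) f(η)⁴ dη > f(y)⁴ - T_M⁴`. At an interior point
where `f` reaches `T_M`, the function `T_M - f` has a local minimum, which forces `L f ≤ 0`, while
the inequality gives `L f > 0`.

For the boundary derivative, compare `f` on `[0, 1]` with Hopf's barrier
`T_M - ε (e^{α y} - 1)`, where `α² > c α + 4 T_M³` and `ε` is chosen so that the barrier equals `f`
at both ends. At a negative interior minimum of barrier minus `f`, the second-order test gives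
`L f ≤ L(barrier)`, which contradicts `L f ≥ f⁴ - T_M⁴ ≥ -4 T_M³ (T_M - f)`. So `f` stays below the
barrier and `f'(0⁺) ≤ -ε α < 0`.
-/

open MeasureTheory

open Set Real Filter Topology

theorem IsLocalMin.nonneg_of_hasDerivAt_of_hasDerivAt {g g' : ℝ → ℝ} {g'' x : ℝ}
    (h : IsLocalMin g x) (hg : ∀ᶠ z in 𝓝 x, HasDerivAt g (g' z) z) (hg' : HasDerivAt g' g'' x) :
    0 ≤ g'' := by
  have hg'' : deriv (deriv g) x = g'' :=
    (hg'.congr_of_eventuallyEq (hg.mono fun z hz => hz.deriv)).deriv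
  by_contra! hneg
  -- otherwise `x` is also a local maximum, so `g` is locally constant and `g'' = 0`
  have hmax : IsLocalMax g x := isLocalMax_of_deriv_deriv_neg (hg'' ▸ hneg) h.deriv_eq_zero
    hg.self_of_nhds.continuousAt
  have hconst : g =ᶠ[𝓝 x] fun _ => g x := (h.and hmax).mono fun z hz => le_antisymm hz.2 hz.1
  have : deriv (deriv g) x = 0 := by rw [hconst.deriv.deriv_eq]; simp
  linarith

theorem ContDiffAt.hasDerivAt_deriv {f : ℝ → ℝ} {x : ℝ} (hf : ContDiffAt ℝ 2 f x) :
    HasDerivAt (deriv f) (deriv (deriv f) x) x :=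
  ((hf.derivWithin (m := 1) (by norm_num)).differentiableAt (by norm_num)).hasDerivAt

theorem ContDiffAt.eventually_hasDerivAt {f : ℝ → ℝ} {x : ℝ} (hf : ContDiffAt ℝ 2 f x) :
    ∀ᶠ z in 𝓝 x, HasDerivAt f (deriv f z) z :=
  (hf.eventually (by simp)).mono fun z hz => (hz.differentiableAt (by norm_num)).hasDerivAt

theorem deriv_deriv_sub_mul_deriv_le_of_isLocalMin {f w w' : ℝ → ℝ} {w'' c y : ℝ}
    (hf : ContDiffAt ℝ 2 f y) (hw : ∀ᶠ z in 𝓝 y, HasDerivAt w (w' z) z)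
    (hw' : HasDerivAt w' w'' y) (hmin : IsLocalMin (fun z => w z - f z) y) :
    deriv (deriv f) y - c * deriv f y ≤ w'' - c * w' y := by
  have hF : ∀ᶠ z in 𝓝 y, HasDerivAt (fun z => w z - f z) (w' z - deriv f z) z :=
    (hw.and hf.eventually_hasDerivAt).mono fun z hz => hz.1.sub hz.2
  have hfirst : w' y - deriv f y = 0 := hmin.hasDerivAt_eq_zero hF.self_of_nhds
  have hsecond := hmin.nonneg_of_hasDerivAt_of_hasDerivAt hF (hw'.sub hf.hasDerivAt_deriv)
  have hcw : c * w' y = c * deriv f y := by rw [sub_eq_zero.1 hfirst]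
  linarith

theorem IsLocalMax.deriv_deriv_sub_mul_deriv_nonpos {f : ℝ → ℝ} {c y : ℝ} (h : IsLocalMax f y)
    (hf : ContDiffAt ℝ 2 f y) : deriv (deriv f) y - c * deriv f y ≤ 0 := by
  have hmin : IsLocalMin (fun z => f y - f z) y := h.mono fun z hz => by simpa using hz
  simpa using deriv_deriv_sub_mul_deriv_le_of_isLocalMin (c := c) hf
    (Eventually.of_forall fun z => hasDerivAt_const z (f y)) (hasDerivAt_const y 0) hmin

theorem ContinuousOn.nonneg_of_isLocalMin {F : ℝ → ℝ} {a b : ℝ} (hF : ContinuousOn F (Icc a b))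
    (ha : 0 ≤ F a) (hb : 0 ≤ F b) (hmin : ∀ x ∈ Ioo a b, IsLocalMin F x → 0 ≤ F x) :
    ∀ x ∈ Icc a b, 0 ≤ F x := by
  intro x hx
  obtain ⟨m, hm, hmin_m⟩ := isCompact_Icc.exists_isMinOn ⟨x, hx⟩ hF
  refine le_trans ?_ (hmin_m hx)
  rcases eq_endpoints_or_mem_Ioo_of_mem_Icc hm with rfl | rfl | hm'
  · exact ha
  · exact hb
  · exact hmin m hm' (hmin_m.isLocalMin (Icc_mem_nhds hm'.1 hm'.2))

theorem HasDerivWithinAt.le_of_eventually_le {f g : ℝ → ℝ} {f' g' a : ℝ}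
    (hf : HasDerivWithinAt f f' (Ici a) a) (hg : HasDerivWithinAt g g' (Ici a) a)
    (ha : f a = g a) (hle : ∀ᶠ x in 𝓝[>] a, f x ≤ g x) : f' ≤ g' := by
  have hslope {h : ℝ → ℝ} {h' : ℝ} (hh : HasDerivWithinAt h h' (Ici a) a) :
      Tendsto (slope h a) (𝓝[>] a) (𝓝 h') :=
    (hasDerivWithinAt_iff_tendsto_slope' self_notMem_Ioi).1 (hasDerivWithinAt_Ioi_iff_Ici.2 hh)
  refine le_of_tendsto_of_tendsto (hslope hf) (hslope hg) ?_
  filter_upwards [hle, self_mem_nhdsWithin] with x hx (hax : a < x)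
  rw [slope_def_field, slope_def_field, ha]
  gcongr

theorem setIntegral_pos_of_forall_pos {X : Type*} [MeasurableSpace X] {μ : Measure X}
    {f : X → ℝ} {s : Set X} (hs : MeasurableSet s) (hμ : 0 < μ s) (hf : IntegrableOn f s μ)
    (hpos : ∀ x ∈ s, 0 < f x) : 0 < ∫ x in s, f x ∂μ := by
  rw [setIntegral_pos_iff_support_of_nonneg_ae
    (ae_restrict_of_forall_mem hs fun x hx => (hpos x hx).le) hf]
  rwa [inter_eq_right.2 fun x hx => Function.mem_support.2 (hpos x hx).ne']

theorem integrableOn_exp_neg_div_Ioi {a : ℝ} (ha : 0 < a) :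
    IntegrableOn (fun t => exp (-t) / t) (Ioi a) := by
  refine ((integrableOn_exp_neg_Ioi a).div_const a).mono'
    (by fun_prop : Measurable fun t : ℝ => exp (-t) / t).aestronglyMeasurable ?_
  filter_upwards [ae_restrict_mem measurableSet_Ioi] with t (ht : a < t)
  rw [norm_div, norm_of_nonneg (exp_pos _).le, norm_of_nonneg (ha.trans ht).le]
  gcongr

theorem Ek_nonneg (x : ℝ) : 0 ≤ Ek x :=
  mul_nonneg (by norm_num) <| setIntegral_nonneg measurableSet_Ioi fun t (ht : |x| < t) =>
    div_nonneg (exp_pos _).le ((abs_nonneg x).trans ht.le)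

theorem Ek_pos {x : ℝ} (hx : x ≠ 0) : 0 < Ek x :=
  mul_pos (by norm_num) <| setIntegral_pos_of_forall_pos measurableSet_Ioi (by simp)
    (integrableOn_exp_neg_div_Ioi (abs_pos.2 hx))
    fun t (ht : |x| < t) => div_pos (exp_pos _) ((abs_nonneg x).trans_lt ht)

-- Normalized by `1 / (2 t)` so that its `x`-sections integrate to `exp (-t)`.
noncomputable def ekIntegrand (p : ℝ × ℝ) : ℝ :=
  {q : ℝ × ℝ | |q.1| < q.2}.indicator (fun q => exp (-q.2) / (2 * q.2)) p

theorem ekIntegrand_nonneg (p : ℝ × ℝ) : 0 ≤ ekIntegrand p := by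
  refine indicator_nonneg (fun q hq => ?_) p
  have hq : |q.1| < q.2 := hq
  exact div_nonneg (exp_pos _).le (by linarith [abs_nonneg q.1])

theorem stronglyMeasurable_ekIntegrand : StronglyMeasurable ekIntegrand :=
  (Measurable.indicator (by fun_prop)
    (measurableSet_lt (by fun_prop) measurable_snd)).stronglyMeasurable

theorem ekIntegrand_left (x : ℝ) :
    (fun t => ekIntegrand (x, t)) = (Ioi |x|).indicator fun t => 2⁻¹ * (exp (-t) / t) := by
  ext t
  simp only [ekIntegrand, indicator_apply, mem_ofPred_eq, mem_Ioi]
  split_ifs <;> field_simp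

theorem integral_ekIntegrand_left (x : ℝ) : ∫ t, ekIntegrand (x, t) = Ek x := by
  rw [ekIntegrand_left, integral_indicator measurableSet_Ioi, integral_const_mul, Ek]
  norm_num

theorem stronglyMeasurable_Ek : StronglyMeasurable Ek := by
  simpa only [integral_ekIntegrand_left] using
    stronglyMeasurable_ekIntegrand.integral_prod_right' (ν := volume)

theorem lintegral_ekIntegrand_right (t : ℝ) :
    ∫⁻ x, ENNReal.ofReal (ekIntegrand (x, t)) =
      (Ioi 0).indicator (fun t => ENNReal.ofReal (exp (-t))) t := by
  have hsection : (fun x => ENNReal.ofReal (ekIntegrand (x, t))) =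
      (Ioo (-t) t).indicator fun _ => ENNReal.ofReal (exp (-t) / (2 * t)) := by
    ext x
    simp only [ekIntegrand, indicator_apply, mem_ofPred_eq, mem_Ioo, ← abs_lt]
    split_ifs <;> simp
  rw [hsection, lintegral_indicator measurableSet_Ioo, setLIntegral_const, volume_Ioo]
  rcases le_or_gt t 0 with ht | ht
  · rw [indicator_of_notMem (by simpa using ht),
      ENNReal.ofReal_of_nonpos (by linarith : t - -t ≤ 0), mul_zero]
  · rw [indicator_of_mem (mem_Ioi.2 ht), ← ENNReal.ofReal_mul (by positivity)]
    congr 1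
    field_simp
    ring

theorem lintegral_ofReal_Ek : ∫⁻ x, ENNReal.ofReal (Ek x) = 1 := by
  have hx : ∀ᵐ x : ℝ, ENNReal.ofReal (Ek x) = ∫⁻ t, ENNReal.ofReal (ekIntegrand (x, t)) := by
    filter_upwards [compl_mem_ae_iff.2 (measure_singleton (0 : ℝ))] with x (hx : x ≠ 0)
    have hint : Integrable fun t => ekIntegrand (x, t) := by
      rw [ekIntegrand_left, integrable_indicator_iff measurableSet_Ioi]
      exact (integrableOn_exp_neg_div_Ioi (abs_pos.2 hx)).const_mul _
    rw [← ofReal_integral_eq_lintegral_ofReal hint (ae_of_all _ fun t => ekIntegrand_nonneg _),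
      integral_ekIntegrand_left]
  calc ∫⁻ x, ENNReal.ofReal (Ek x)
      = ∫⁻ x, ∫⁻ t, ENNReal.ofReal (ekIntegrand (x, t)) := lintegral_congr_ae hx
    _ = ∫⁻ t, ∫⁻ x, ENNReal.ofReal (ekIntegrand (x, t)) :=
        lintegral_lintegral_swap (ENNReal.measurable_ofReal.comp
          stronglyMeasurable_ekIntegrand.measurable).aemeasurable
    _ = ∫⁻ t in Ioi 0, ENNReal.ofReal (exp (-t)) := by
        simp only [lintegral_ekIntegrand_right, lintegral_indicator measurableSet_Ioi]
    _ = 1 := by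
        rw [← ofReal_integral_eq_lintegral_ofReal (integrableOn_exp_neg_Ioi 0)
          (ae_of_all _ fun t => (exp_pos _).le), integral_exp_neg_Ioi_zero, ENNReal.ofReal_one]

theorem integrable_Ek : Integrable Ek := by
  refine ⟨stronglyMeasurable_Ek.aestronglyMeasurable, ?_⟩
  rw [hasFiniteIntegral_iff_ofReal (ae_of_all _ Ek_nonneg), lintegral_ofReal_Ek]
  exact ENNReal.one_lt_top

theorem integral_Ek : ∫ x, Ek x = 1 := by
  rw [integral_eq_lintegral_of_nonneg_ae (ae_of_all _ Ek_nonneg)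
    stronglyMeasurable_Ek.aestronglyMeasurable, lintegral_ofReal_Ek, ENNReal.toReal_one]

theorem setIntegral_Ioi_Ek_sub_lt_one (y : ℝ) : ∫ η in Ioi 0, Ek (y - η) < 1 := by
  have hint : Integrable fun η => Ek (y - η) := integrable_Ek.comp_sub_left y
  have htail : 0 < ∫ η in Iic 0, Ek (y - η) :=
    (setIntegral_pos_of_forall_pos measurableSet_Iio (by simp) hint.integrableOn
      fun η (hη : η < min 0 y) => Ek_pos (by linarith [min_le_right 0 y])).trans_le
      (setIntegral_mono_set hint.integrableOn (ae_of_all _ fun η => Ek_nonneg _)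
        (Iio_subset_Iic (min_le_left 0 y)).eventuallyLE)
  have htotal : (∫ η in Ioi 0, Ek (y - η)) + ∫ η in Iic 0, Ek (y - η) = 1 := by
    rw [← compl_Ioi, integral_add_compl measurableSet_Ioi hint,
      integral_sub_left_eq_self Ek volume y, integral_Ek]
  linarith

theorem setIntegral_Ioi_Ek_sub_mul_lt {g : ℝ → ℝ} {M : ℝ} (hM : 0 < M)
    (hg : ∀ η ∈ Ioi (0 : ℝ), 0 ≤ g η ∧ g η ≤ M) (y : ℝ) :
    ∫ η in Ioi 0, Ek (y - η) * g η < M := by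
  have hint : IntegrableOn (fun η => Ek (y - η)) (Ioi 0) :=
    (integrable_Ek.comp_sub_left y).integrableOn
  calc ∫ η in Ioi 0, Ek (y - η) * g η
      ≤ ∫ η in Ioi 0, M * Ek (y - η) := by
        refine integral_mono_of_nonneg ?_ (hint.const_mul M) ?_
        · filter_upwards [ae_restrict_mem measurableSet_Ioi] with η hη
          exact mul_nonneg (Ek_nonneg _) (hg η hη).1
        · filter_upwards [ae_restrict_mem measurableSet_Ioi] with η hη
          rw [mul_comm M]
          exact mul_le_mul_of_nonneg_left (hg η hη).2 (Ek_nonneg _)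
    _ = M * ∫ η in Ioi 0, Ek (y - η) := integral_const_mul M _
    _ < M := mul_lt_of_lt_one_right hM (setIntegral_Ioi_Ek_sub_lt_one y)

theorem pow_four_sub_pow_four_le {x T : ℝ} (hx : 0 ≤ x) (hxT : x ≤ T) :
    T ^ 4 - x ^ 4 ≤ 4 * T ^ 3 * (T - x) := by
  nlinarith [mul_nonneg (sub_nonneg.2 hxT) (mul_nonneg hx hx), mul_nonneg (sub_nonneg.2 hxT) hx,
    mul_nonneg (sub_nonneg.2 hxT) (sub_nonneg.2 hxT), pow_le_pow_left₀ hx hxT 2]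

noncomputable def hopfBarrier (T ε α y : ℝ) : ℝ := T - ε * (exp (α * y) - 1)

theorem hasDerivAt_hopfBarrier (T ε α y : ℝ) :
    HasDerivAt (hopfBarrier T ε α) (-(ε * α * exp (α * y))) y := by
  have := ((((hasDerivAt_id y).const_mul α).exp.sub_const 1).const_mul ε).const_sub T
  exact this.congr_deriv (by simp only [id, mul_one]; ring)

theorem hasDerivAt_deriv_hopfBarrier (ε α y : ℝ) :
    HasDerivAt (fun z => -(ε * α * exp (α * z))) (-(ε * α * α * exp (α * y))) y := by
  have := (((hasDerivAt_id y).const_mul α).exp.const_mul (ε * α)).neg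
  exact this.congr_deriv (by simp only [id, mul_one]; ring)

theorem le_hopfBarrier {c T ε α : ℝ} {f : ℝ → ℝ} (hα : c * α + 4 * T ^ 3 < α ^ 2) (hε : 0 < ε)
    (hfc : ContinuousOn f (Icc 0 1)) (hf : ∀ y ∈ Ioo 0 1, ContDiffAt ℝ 2 f y)
    (hb : ∀ y ∈ Ioo 0 1, 0 ≤ f y ∧ f y ≤ T)
    (hL : ∀ y ∈ Ioo 0 1, f y ^ 4 - T ^ 4 ≤ deriv (deriv f) y - c * deriv f y)
    (h0 : f 0 ≤ T) (h1 : f 1 ≤ hopfBarrier T ε α 1) :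
    ∀ y ∈ Icc 0 1, f y ≤ hopfBarrier T ε α y := by
  have hcont : ContinuousOn (fun y => hopfBarrier T ε α y - f y) (Icc 0 1) :=
    (Continuous.continuousOn (by unfold hopfBarrier; fun_prop)).sub hfc
  refine fun y hy => sub_nonneg.1 (hcont.nonneg_of_isLocalMin ?_ ?_ ?_ y hy)
  · simpa [hopfBarrier] using h0
  · linarith
  intro x hx hmin
  by_contra! hneg
  have hLw := deriv_deriv_sub_mul_deriv_le_of_isLocalMin (c := c) (hf x hx)
    (Eventually.of_forall (hasDerivAt_hopfBarrier T ε α)) (hasDerivAt_deriv_hopfBarrier ε α x) hmin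
  obtain ⟨hfx0, hfxT⟩ := hb x hx
  have hgap : T - f x < ε * exp (α * x) := by
    unfold hopfBarrier at hneg; nlinarith
  have hεE : 0 < ε * exp (α * x) := by positivity
  have hT : 0 ≤ T := hfx0.trans hfxT
  -- `f'' - c f' ≥ f ^ 4 - T ^ 4 ≥ -4 T ^ 3 (T - f)` is incompatible with touching the barrier
  have : ε * exp (α * x) * (α ^ 2 - c * α) ≤ ε * exp (α * x) * (4 * T ^ 3) := by
    nlinarith [hL x hx, pow_four_sub_pow_four_le hfx0 hfxT, mul_le_mul_of_nonneg_left hgap.le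
      (by positivity : (0:ℝ) ≤ 4 * T ^ 3)]
  nlinarith [le_of_mul_le_mul_left this hεE]

theorem derivWithin_Ici_zero_neg_of_hopfBarrier {c T : ℝ} {f : ℝ → ℝ} (hc : 0 < c) (hT : 0 < T)
    (hf : ContDiffOn ℝ 2 f (Ici 0)) (hb : ∀ y ∈ Ioo 0 1, 0 ≤ f y ∧ f y ≤ T)
    (hL : ∀ y ∈ Ioo 0 1, f y ^ 4 - T ^ 4 ≤ deriv (deriv f) y - c * deriv f y)
    (hf0 : f 0 = T) (hf1 : f 1 < T) : derivWithin f (Ici 0) 0 < 0 := by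
  set α := c + 4 * T ^ 3 + 1
  have hα : c * α + 4 * T ^ 3 < α ^ 2 := by nlinarith [pow_pos hT 3]
  have hexp : 0 < exp α - 1 := sub_pos.2 (one_lt_exp_iff.2 (by positivity))
  set ε := (T - f 1) / (exp α - 1)
  have hε : 0 < ε := div_pos (sub_pos.2 hf1) hexp
  have h1 : f 1 ≤ hopfBarrier T ε α 1 := by
    simp [hopfBarrier, ε, div_mul_cancel₀ _ hexp.ne']
  have hbarrier := le_hopfBarrier hα hε (hf.continuousOn.mono Icc_subset_Ici_self)
    (fun y hy => hf.contDiffAt (Ici_mem_nhds hy.1)) hb hL hf0.le h1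
  have hslope := HasDerivWithinAt.le_of_eventually_le
    ((hf.differentiableOn (by norm_num) 0 self_mem_Ici).hasDerivWithinAt)
    (hasDerivAt_hopfBarrier T ε α 0).hasDerivWithinAt (by simp [hopfBarrier, hf0])
    (mem_of_superset (Ioo_mem_nhdsGT one_pos) fun y hy => hbarrier y (Ioo_subset_Icc_self hy))
  simp only [mul_zero, exp_zero, mul_one] at hslope
  nlinarith [mul_pos hε (by positivity : 0 < α)]

/-- Hopf-type lemma: a bounded solution of the non-local equation with
f(0) = T_M satisfies f < T_M on (0,∞) and ∂_y f(0⁺) < 0. -/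
theorem stmt13 (c T_M : ℝ) (hc : 0 < c) (hTM : 0 < T_M) (f : ℝ → ℝ)
    (hf : ContDiffOn ℝ 2 f (Set.Ici 0))
    (hb : ∀ y ∈ Set.Ici (0 : ℝ), 0 ≤ f y ∧ f y ≤ T_M)
    (hf0 : f 0 = T_M)
    (heq : ∀ y ∈ Set.Ioi (0 : ℝ),
      deriv (deriv f) y - c * deriv f y - (f y) ^ 4 +
        (∫ η in Set.Ioi (0 : ℝ), Ek (y - η) * (f η) ^ 4) = 0) :
    (∀ y ∈ Set.Ioi (0 : ℝ), f y < T_M) ∧ derivWithin f (Set.Ici 0) 0 < 0 := by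
  have hb4 : ∀ η ∈ Ioi (0 : ℝ), 0 ≤ f η ^ 4 ∧ f η ^ 4 ≤ T_M ^ 4 := fun η hη =>
    ⟨by positivity, pow_le_pow_left₀ (hb η (Ioi_subset_Ici_self hη)).1
      (hb η (Ioi_subset_Ici_self hη)).2 4⟩
  have hL : ∀ y ∈ Ioi (0 : ℝ), f y ^ 4 - T_M ^ 4 < deriv (deriv f) y - c * deriv f y :=
    fun y hy => by linarith [heq y hy, setIntegral_Ioi_Ek_sub_mul_lt (pow_pos hTM 4) hb4 y]
  have hlt : ∀ y ∈ Ioi (0 : ℝ), f y < T_M := by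
    intro y hy
    refine (hb y (Ioi_subset_Ici_self hy)).2.lt_of_ne fun hyT => ?_
    have hmax : IsLocalMax f y := mem_of_superset (Ici_mem_nhds hy) fun z hz => hyT ▸ (hb z hz).2
    have hLy := hL y hy
    rw [hyT] at hLy
    linarith [hmax.deriv_deriv_sub_mul_deriv_nonpos (c := c) (hf.contDiffAt (Ici_mem_nhds hy))]
  exact ⟨hlt, derivWithin_Ici_zero_neg_of_hopfBarrier hc hTM hf (fun y hy => hb y hy.1.le)
    (fun y hy => (hL y hy.1).le) hf0 (hlt 1 (by norm_num))⟩
end
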